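/- If Z ~ N(m, σ²) with σ > 0 and z* ∈ ℝ, let EI = E[(z* - Z)^+]. Then Var((z* - Z)^+) = EI·(z* - m - EI) + σ²·Φ((z* - m)/σ), where Φ is the standard normal CDF. -/

import Mathlib

open MeasureTheory ProbabilityTheory

/-- The standard normal density. -/
noncomputable def stdNormalPDF (s : ℝ) : ℝ :=
  (Real.sqrt (2 * Real.pi))⁻¹ * Real.exp (-s ^ 2 / 2)

/-- The standard normal cumulative distribution function. -/
noncomputable def stdNormalCDF (t : ℝ) : ℝ :=
  ∫ s in Set.Iic t, stdNormalPDF s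

open Set

/-! Writing `Z = σ S + m` with `S` standard normal and `α = (z* - m) / σ`, the improvement is
`σ (α - S)⁺`, which reduces everything to `m = 0`, `σ = 1`. There
`E[((α - S)⁺)²] = α E[(α - S)⁺] + Φ(α)`: on `(-∞, α]` the two integrands differ by
`(s² - α s - 1) φ(s)`, the derivative of `(α - s) φ(s)`, which vanishes at `α` and at `-∞`. -/

lemma gaussianPDFReal_zero_one : gaussianPDFReal 0 1 = stdNormalPDF := by
  ext x
  simp [gaussianPDFReal, stdNormalPDF]

lemma hasDerivAt_stdNormalPDF (x : ℝ) :
    HasDerivAt stdNormalPDF (-x * stdNormalPDF x) x := by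
  have h : HasDerivAt (fun y : ℝ => -y ^ 2 / 2) (-x) x :=
    ((hasDerivAt_pow 2 x).fun_neg.div_const 2).congr_deriv (by push_cast; ring)
  exact (h.exp.const_mul _).congr_deriv (by simp only [stdNormalPDF]; ring)

lemma integral_gaussianReal_zero_one (f : ℝ → ℝ) :
    ∫ x, f x ∂gaussianReal 0 1 = ∫ x, stdNormalPDF x * f x := by
  simp [integral_gaussianReal_eq_integral_smul one_ne_zero, gaussianPDFReal_zero_one]

lemma integrable_gaussianReal_zero_one_iff {f : ℝ → ℝ} :
    Integrable f (gaussianReal 0 1) ↔ Integrable fun x => stdNormalPDF x * f x := by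
  rw [gaussianReal_of_var_ne_zero 0 one_ne_zero, integrable_withDensity_iff_integrable_smul'
    (measurable_gaussianPDF 0 1) (ae_of_all _ fun _ => gaussianPDF_lt_top)]
  simp_rw [gaussianPDF, ENNReal.toReal_ofReal (gaussianPDFReal_nonneg _ _ _),
    gaussianPDFReal_zero_one, smul_eq_mul]

lemma integrable_stdNormalPDF_mul_sub_pow (α : ℝ) (k : ℕ) :
    Integrable fun x => stdNormalPDF x * (α - x) ^ k := by
  rw [← integrable_gaussianReal_zero_one_iff]
  have h : MemLp (fun x => α - x) k (gaussianReal 0 1) :=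
    (memLp_const α).sub (memLp_id_gaussianReal (k : NNReal))
  refine h.integrable_norm_pow'.mono' (by fun_prop) (ae_of_all _ fun x => ?_)
  simp [norm_pow]

lemma integral_Iic_stdNormalPDF_mul_sub_sq (α : ℝ) :
    ∫ x in Iic α, stdNormalPDF x * (α - x) ^ 2 =
      α * (∫ x in Iic α, stdNormalPDF x * (α - x)) + stdNormalCDF α := by
  have hderiv : ∀ x, HasDerivAt (fun y => stdNormalPDF y * (α - y))
      (stdNormalPDF x * (α - x) ^ 2 - α * (stdNormalPDF x * (α - x)) - stdNormalPDF x) x :=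
    fun x => ((hasDerivAt_stdNormalPDF x).mul ((hasDerivAt_id x).const_sub α)).congr_deriv
      (by simp only [id]; ring)
  have hint : ∀ k : ℕ, IntegrableOn (fun x => stdNormalPDF x * (α - x) ^ k) (Iic α) :=
    fun k => (integrable_stdNormalPDF_mul_sub_pow α k).integrableOn
  have hint₀ : IntegrableOn stdNormalPDF (Iic α) := by simpa using hint 0
  have hint₁ : IntegrableOn (fun x => stdNormalPDF x * (α - x)) (Iic α) := by simpa using hint 1
  have hint₂₁ : IntegrableOn
      (fun x => stdNormalPDF x * (α - x) ^ 2 - α * (stdNormalPDF x * (α - x))) (Iic α) :=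
    (hint 2).sub (hint₁.const_mul α)
  have hint_deriv := hint₂₁.sub hint₀
  have hlim := tendsto_zero_of_hasDerivAt_of_integrableOn_Iic (fun x _ => hderiv x) hint_deriv hint₁
  have hFTC := integral_Iic_of_hasDerivAt_of_tendsto' (fun x _ => hderiv x) hint_deriv hlim
  rw [integral_sub hint₂₁ hint₀, integral_sub (hint 2) (hint₁.const_mul α),
    integral_const_mul, sub_self, mul_zero] at hFTC
  rw [stdNormalCDF]
  linarith

lemma integral_comp_max_sub_gaussianReal_zero_one {f : ℝ → ℝ} (hf : f 0 = 0) (α : ℝ) :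
    ∫ x, f (max (α - x) 0) ∂gaussianReal 0 1 = ∫ x in Iic α, stdNormalPDF x * f (α - x) := by
  rw [integral_gaussianReal_zero_one, ← integral_indicator measurableSet_Iic]
  congr 1 with x
  by_cases hx : x ≤ α
  · simp [hx]
  · simp [hx, max_eq_right (by linarith : α - x ≤ 0), hf]

lemma integral_sq_max_sub_gaussianReal_zero_one (α : ℝ) :
    ∫ x, max (α - x) 0 ^ 2 ∂gaussianReal 0 1 =
      α * (∫ x, max (α - x) 0 ∂gaussianReal 0 1) + stdNormalCDF α := by
  rw [integral_comp_max_sub_gaussianReal_zero_one (f := fun y => y ^ 2) (zero_pow two_ne_zero),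
    integral_comp_max_sub_gaussianReal_zero_one (f := fun y => y) rfl]
  exact integral_Iic_stdNormalPDF_mul_sub_sq α

lemma variance_max_sub_gaussianReal_zero_one (α : ℝ) :
    Var[fun x => max (α - x) 0; gaussianReal 0 1] =
      (∫ x, max (α - x) 0 ∂gaussianReal 0 1) * (α - ∫ x, max (α - x) 0 ∂gaussianReal 0 1) +
        stdNormalCDF α := by
  have hmem : MemLp (fun x => max (α - x) 0) 2 (gaussianReal 0 1) :=
    ((memLp_const α).sub (memLp_id_gaussianReal' 2 ENNReal.ofNat_ne_top)).mono (by fun_prop)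
      (ae_of_all _ fun x => by
        rw [Real.norm_eq_abs, Real.norm_eq_abs, abs_of_nonneg (le_max_right _ _)]
        exact max_le (le_abs_self _) (abs_nonneg _))
  rw [variance_eq_sub hmem]
  simp only [Pi.pow_apply]
  rw [integral_sq_max_sub_gaussianReal_zero_one]
  ring

lemma gaussianReal_eq_map_gaussianReal_zero_one (m σ : ℝ) :
    gaussianReal m (σ ^ 2).toNNReal = (gaussianReal 0 1).map (fun s => σ * s + m) := by
  rw [show (fun s => σ * s + m) = (· + m) ∘ (σ * ·) from rfl,
    ← Measure.map_map (measurable_add_const m) (measurable_const_mul σ),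
    gaussianReal_map_const_mul, gaussianReal_map_add_const]
  congr 1
  · simp
  · ext; simp [sq_nonneg]

lemma max_sub_mul_add {σ : ℝ} (hσ : 0 < σ) (z m s : ℝ) :
    max (z - (σ * s + m)) 0 = σ * max ((z - m) / σ - s) 0 := by
  rw [mul_max_of_nonneg _ _ hσ.le, mul_zero, mul_sub, mul_div_cancel₀ _ hσ.ne']
  ring_nf

/-- Variance of the improvement: if `Z ~ N(m, σ²)` with `σ > 0`, `z* ∈ ℝ` and
`EI = E[(z* - Z)⁺]`, then `Var((z* - Z)⁺) = EI (z* - m - EI) + σ² Φ((z* - m)/σ)`. -/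
theorem improvement_variance_closed_form
    {Ω : Type*} [MeasurableSpace Ω] (μ : Measure Ω) [IsProbabilityMeasure μ]
    (Z : Ω → ℝ) (m σ : ℝ) (hσ : 0 < σ)
    (hZ : μ.map Z = gaussianReal m (Real.toNNReal (σ ^ 2)))
    (zstar : ℝ)
    (EI : ℝ) (hEI : EI = ∫ ω, max (zstar - Z ω) 0 ∂μ) :
    variance (fun ω => max (zstar - Z ω) 0) μ =
      EI * (zstar - m - EI) + σ ^ 2 * stdNormalCDF ((zstar - m) / σ) := by
  have hZm : AEMeasurable Z μ :=
    .of_map_ne_zero (hZ ▸ IsProbabilityMeasure.ne_zero _)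
  rw [gaussianReal_eq_map_gaussianReal_zero_one] at hZ
  have hg : Measurable fun x : ℝ => max (zstar - x) 0 := by fun_prop
  have hA : Measurable fun s : ℝ => σ * s + m := by fun_prop
  have hmean : EI = σ * ∫ s, max ((zstar - m) / σ - s) 0 ∂gaussianReal 0 1 := by
    rw [hEI, ← integral_map hZm hg.aestronglyMeasurable, hZ,
      integral_map hA.aemeasurable hg.aestronglyMeasurable]
    simp_rw [max_sub_mul_add hσ]
    exact integral_const_mul _ _
  have hvar : variance (fun ω => max (zstar - Z ω) 0) μ =
      σ ^ 2 * Var[fun s => max ((zstar - m) / σ - s) 0; gaussianReal 0 1] := by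
    rw [← Function.comp_def (fun x => max (zstar - x) 0) Z, ← variance_map hg.aemeasurable hZm,
      hZ, variance_map hg.aemeasurable hA.aemeasurable, Function.comp_def]
    simp_rw [max_sub_mul_add hσ]
    exact variance_const_mul _ _ _
  rw [hvar, variance_max_sub_gaussianReal_zero_one, hmean]
  field_simp
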